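/- Let P(z) = ∏_{j=1}^N (z − ρ_j e^{2πiθ_j}) be a monic polynomial of degree N with ρ_j > 0 for all j (so P(0) ≠ 0), with constant term a₀ = P(0), and let Q(z) = ∏_{j=1}^N (z − e^{2πiθ_j}). Then |P(z)|/√|a₀| ≥ |Q(z)| for every z with |z| = 1, and consequently h(P) ≥ h(Q) = ∫₀¹ log⁺|Q(e^{2πiθ})| dθ. -/

import Mathlib

/-!
For `|z| = |w| = 1` and real `r` one has `|z - r w|² = r |z - w|² + (1 - r)²`, so
`√r |z - w| ≤ |z - r w|` when `r ≥ 0`. Multiplying over the roots gives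
`√|P(0)| |Q(z)| ≤ |P(z)|` on the unit circle, and the bound on the heights follows because
`log⁺` is monotone on `[0, ∞)`.
-/

open MeasureTheory

/-- `e t = e^{2πit}`. -/
noncomputable def e (t : ℝ) : ℂ := Complex.exp (2 * Real.pi * Complex.I * t)

open Real

lemma norm_e (t : ℝ) : ‖e t‖ = 1 := by
  rw [e, show 2 * (π : ℂ) * Complex.I * t = ((2 * π * t : ℝ) : ℂ) * Complex.I by push_cast; ring]
  exact Complex.norm_exp_ofReal_mul_I _

@[fun_prop]
lemma continuous_e : Continuous e := by
  unfold e; fun_prop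

lemma Complex.norm_sub_ofReal_mul_sq {z w : ℂ} (hz : ‖z‖ = 1) (hw : ‖w‖ = 1) (r : ℝ) :
    ‖z - r * w‖ ^ 2 = r * ‖z - w‖ ^ 2 + (1 - r) ^ 2 := by
  have hz2 : z.re * z.re + z.im * z.im = 1 := by
    rw [← Complex.normSq_apply, ← Complex.sq_norm, hz, one_pow]
  have hw2 : w.re * w.re + w.im * w.im = 1 := by
    rw [← Complex.normSq_apply, ← Complex.sq_norm, hw, one_pow]
  simp only [Complex.sq_norm, Complex.normSq_apply, Complex.sub_re, Complex.sub_im,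
    Complex.mul_re, Complex.mul_im, Complex.ofReal_re, Complex.ofReal_im]
  linear_combination (1 - r) * hz2 + (r ^ 2 - r) * hw2

lemma Complex.norm_sub_mul_sqrt_le {z w : ℂ} (hz : ‖z‖ = 1) (hw : ‖w‖ = 1) {r : ℝ}
    (hr : 0 ≤ r) : ‖z - w‖ * √r ≤ ‖z - r * w‖ := by
  rw [← pow_le_pow_iff_left₀ (by positivity) (norm_nonneg _) two_ne_zero, mul_pow,
    sq_sqrt hr, mul_comm, Complex.norm_sub_ofReal_mul_sq hz hw]
  exact le_add_of_nonneg_right (sq_nonneg _)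

lemma Complex.norm_prod_sub_le_div_sqrt {ι : Type*} (s : Finset ι) {z : ℂ} (hz : ‖z‖ = 1)
    {w : ι → ℂ} (hw : ∀ i ∈ s, ‖w i‖ = 1) {r : ι → ℝ} (hr : ∀ i ∈ s, 0 < r i) :
    ‖∏ i ∈ s, (z - w i)‖ ≤ ‖∏ i ∈ s, (z - r i * w i)‖ / √‖∏ i ∈ s, (0 - r i * w i)‖ := by
  have hconst : ‖∏ i ∈ s, (0 - r i * w i)‖ = ∏ i ∈ s, r i := by
    simp only [norm_prod, zero_sub, norm_neg, norm_mul, Complex.norm_real, norm_eq_abs]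
    exact Finset.prod_congr rfl fun i hi => by rw [hw i hi, mul_one, abs_of_pos (hr i hi)]
  rw [hconst, le_div_iff₀ (sqrt_pos.mpr (Finset.prod_pos hr)),
    sqrt_prod s fun i hi => (hr i hi).le, norm_prod, norm_prod, ← Finset.prod_mul_distrib]
  exact Finset.prod_le_prod (fun i _ => by positivity)
    fun i hi => Complex.norm_sub_mul_sqrt_le hz (hw i hi) (hr i hi).le

lemma intervalIntegral.integral_posLog_mono {f g : ℝ → ℝ} (hf : Continuous f)
    (hg : Continuous g) {a b : ℝ} (hab : a ≤ b) (hf0 : ∀ t ∈ Set.Icc a b, 0 ≤ f t)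
    (hfg : ∀ t ∈ Set.Icc a b, f t ≤ g t) :
    ∫ t in a..b, log⁺ (f t) ≤ ∫ t in a..b, log⁺ (g t) :=
  intervalIntegral.integral_mono_on hab
    ((continuous_posLog.comp hf).intervalIntegrable a b)
    ((continuous_posLog.comp hg).intervalIntegrable a b)
    fun t ht => posLog_le_posLog (hf0 t ht) (hfg t ht)

/-- Schur's observation: moving the roots of `P` radially onto the unit circle decreases
the normalized modulus on the unit circle, hence decreases the height `h`. -/
theorem stmt17 (N : ℕ) (ρ : Fin N → ℝ) (hρ : ∀ j, 0 < ρ j) (θ : Fin N → ℝ)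
    (P Q : ℂ → ℂ)
    (hPdef : P = fun z => ∏ j, (z - (ρ j : ℂ) * e (θ j)))
    (hQdef : Q = fun z => ∏ j, (z - e (θ j))) :
    (∀ z : ℂ, ‖z‖ = 1 →
      ‖Q z‖ ≤ ‖P z‖ / Real.sqrt (‖P 0‖)) ∧
    (∫ t in (0:ℝ)..1, max (Real.log (‖Q (e t)‖)) 0) ≤
      ∫ t in (0:ℝ)..1,
        max (Real.log (‖P (e t)‖ / Real.sqrt (‖P 0‖))) 0 := by
  have schur : ∀ z : ℂ, ‖z‖ = 1 → ‖Q z‖ ≤ ‖P z‖ / √‖P 0‖ := fun z hz => by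
    subst hPdef hQdef
    exact Complex.norm_prod_sub_le_div_sqrt _ hz (fun j _ => norm_e _) fun j _ => hρ j
  refine ⟨schur, ?_⟩
  simp only [max_comm _ (0 : ℝ), ← posLog_apply]
  have hP : Continuous P := hPdef ▸ by fun_prop
  have hQ : Continuous Q := hQdef ▸ by fun_prop
  exact intervalIntegral.integral_posLog_mono (by fun_prop) (by fun_prop) zero_le_one
    (fun t _ => norm_nonneg _) fun t _ => schur _ (norm_e t)
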